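/- Let d ≥ 1, let g ≥ 0 and μ ≥ 0, and let h be a smooth, strictly positive solution on [0,T] of the lubrication equation ∂_t h − div(g h ∇h − μ h ∇Δh) = 0 on 𝕋^d. Then for every t ∈ [0,T], (d/dt) ∫_{𝕋^d} h(t,x)^2 dx ≤ 0. -/

import Mathlib

open MeasureTheory Real

/-- Partial derivative `∂ᵢ f` of a function on `ℝᵈ` (as `EuclideanSpace`). -/
noncomputable def pder {d : ℕ} (i : Fin d) (f : EuclideanSpace ℝ (Fin d) → ℝ)
    (x : EuclideanSpace ℝ (Fin d)) : ℝ :=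
  fderiv ℝ f x (EuclideanSpace.single i 1)

/-- The Laplacian `Δ f = ∑ᵢ ∂ᵢ∂ᵢ f`. -/
noncomputable def lap {d : ℕ} (f : EuclideanSpace ℝ (Fin d) → ℝ)
    (x : EuclideanSpace ℝ (Fin d)) : ℝ :=
  ∑ i, pder i (pder i f) x

/-- Squared norm of the gradient, `|∇f|² = ∑ᵢ (∂ᵢ f)²`. -/
noncomputable def gradSq {d : ℕ} (f : EuclideanSpace ℝ (Fin d) → ℝ)
    (x : EuclideanSpace ℝ (Fin d)) : ℝ :=
  ∑ i, (pder i f x) ^ 2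

/-- Squared Frobenius norm of the Hessian, `|∇∇f|² = ∑ᵢⱼ (∂ᵢ∂ⱼ f)²`. -/
noncomputable def hessSq {d : ℕ} (f : EuclideanSpace ℝ (Fin d) → ℝ)
    (x : EuclideanSpace ℝ (Fin d)) : ℝ :=
  ∑ i, ∑ j, (pder i (pder j f) x) ^ 2

/-- The fundamental domain `[0,1)^d` of the torus `𝕋^d`. -/
def fundDom (d : ℕ) : Set (EuclideanSpace ℝ (Fin d)) :=
  {x | ∀ i, 0 ≤ x i ∧ x i < 1}

/-- `ℤ^d`-periodicity of a function on `ℝ^d`. -/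
def ZPeriodic {d : ℕ} (f : EuclideanSpace ℝ (Fin d) → ℝ) : Prop :=
  ∀ (x : EuclideanSpace ℝ (Fin d)) (k : Fin d → ℤ),
    f (x + (WithLp.equiv 2 (Fin d → ℝ)).symm (fun i => (k i : ℝ))) = f x

/-!
Differentiating under the integral sign and inserting the equation gives
`(d/dt) ∫ h² = 2 ∫ h div(g h ∇h − μ h ∇Δh)`, and one integration by parts on the torus turns
this into `−2g ∫ h |∇h|² + 2μ ∫ h ∇h·∇Δh`. The first term is nonpositive because `h > 0`.
For the second, three more integrations by parts give, with `u = h(t,·)`, `E = ∫ u ∇u·∇Δu`,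
`Y = ∫ ∇u·∇²u ∇u` and `B = ∫ |∇u|² Δu`,
`E = −Y − ∫ u |∇²u|²`, `E = −B − ∫ u (Δu)²` and `2Y = −B`;
eliminating `Y` and `B` leaves `3E = −2 ∫ u |∇²u|² − ∫ u (Δu)² ≤ 0`.
Integrals over `[0,1)^d` of partial derivatives of periodic functions vanish by the divergence
theorem on the unit cube, whose opposite faces cancel by periodicity.
-/

open scoped ContDiff

section PartialDerivatives

variable {d : ℕ} {f g : EuclideanSpace ℝ (Fin d) → ℝ}

theorem ContDiff.pder {m n : WithTop ℕ∞} (hf : ContDiff ℝ n f) (hmn : m + 1 ≤ n)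
    (i : Fin d) : ContDiff ℝ m (pder i f) :=
  (hf.fderiv_right hmn).clm_apply contDiff_const

theorem pder_mul {x : EuclideanSpace ℝ (Fin d)} (hf : DifferentiableAt ℝ f x)
    (hg : DifferentiableAt ℝ g x) (i : Fin d) :
    pder i (fun y => f y * g y) x = pder i f x * g x + f x * pder i g x := by
  simp only [pder, fderiv_fun_mul hf hg, add_apply, smul_apply, smul_eq_mul]
  ring

theorem pder_sum {ι : Type*} (s : Finset ι) {F : ι → EuclideanSpace ℝ (Fin d) → ℝ}
    {x : EuclideanSpace ℝ (Fin d)} (hF : ∀ k ∈ s, DifferentiableAt ℝ (F k) x) (i : Fin d) :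
    pder i (fun y => ∑ k ∈ s, F k y) x = ∑ k ∈ s, pder i (F k) x := by
  simp [pder, fderiv_fun_sum hF]

theorem pder_pder_apply {x : EuclideanSpace ℝ (Fin d)}
    (hf : DifferentiableAt ℝ (fderiv ℝ f) x) (i j : Fin d) :
    pder i (pder j f) x
      = fderiv ℝ (fderiv ℝ f) x (EuclideanSpace.single i 1) (EuclideanSpace.single j 1) := by
  unfold pder
  simp [fderiv_clm_apply hf (differentiableAt_const _)]

theorem pder_comm (hf : ContDiff ℝ 2 f) (i j : Fin d) :
    pder i (pder j f) = pder j (pder i f) := by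
  funext x
  have hdf : DifferentiableAt ℝ (fderiv ℝ f) x :=
    ((hf.fderiv_right (m := 1) le_rfl).differentiable one_ne_zero) x
  rw [pder_pder_apply hdf, pder_pder_apply hdf]
  exact hf.contDiffAt.isSymmSndFDerivAt (by simp) _ _

theorem pder_lap (hf : ContDiff ℝ 3 f) (i : Fin d) : pder i (lap f) = lap (pder i f) := by
  funext x
  have hf' : ∀ j, ContDiff ℝ 1 (pder j (pder j f)) := fun j =>
    (hf.pder (m := 2) le_rfl j).pder le_rfl j
  rw [show lap f = fun y => ∑ j, pder j (pder j f) y from rfl,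
    pder_sum _ (fun j _ => (hf' j).differentiable one_ne_zero x)]
  refine Finset.sum_congr rfl fun j _ => ?_
  rw [pder_comm (hf.pder le_rfl j), pder_comm (hf.of_le (by norm_num)) i j]

end PartialDerivatives

section Periodic

variable {d : ℕ} {f g : EuclideanSpace ℝ (Fin d) → ℝ}

theorem ZPeriodic.pder (hf : ZPeriodic f) (i : Fin d) : ZPeriodic (pder i f) := by
  intro x k
  change fderiv ℝ f _ _ = fderiv ℝ f x _
  rw [← fderiv_comp_add_right, funext (hf · k)]

structure SmoothPeriodic (f : EuclideanSpace ℝ (Fin d) → ℝ) : Prop where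
  contDiff : ContDiff ℝ ∞ f
  zPeriodic : ZPeriodic f

namespace SmoothPeriodic

theorem continuous (hf : SmoothPeriodic f) : Continuous f := hf.contDiff.continuous

theorem differentiable (hf : SmoothPeriodic f) : Differentiable ℝ f :=
  hf.contDiff.differentiable (by simp)

theorem const (c : ℝ) : SmoothPeriodic fun _ : EuclideanSpace ℝ (Fin d) => c :=
  ⟨contDiff_const, fun _ _ => rfl⟩

theorem mul (hf : SmoothPeriodic f) (hg : SmoothPeriodic g) : SmoothPeriodic fun x => f x * g x :=
  ⟨hf.contDiff.mul hg.contDiff, fun x k => by simp only [hf.zPeriodic x k, hg.zPeriodic x k]⟩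

theorem sub (hf : SmoothPeriodic f) (hg : SmoothPeriodic g) : SmoothPeriodic fun x => f x - g x :=
  ⟨hf.contDiff.sub hg.contDiff, fun x k => by simp only [hf.zPeriodic x k, hg.zPeriodic x k]⟩

theorem pder (hf : SmoothPeriodic f) (i : Fin d) : SmoothPeriodic (pder i f) :=
  ⟨hf.contDiff.pder le_rfl i, hf.zPeriodic.pder i⟩

theorem lap (hf : SmoothPeriodic f) : SmoothPeriodic (lap f) :=
  ⟨ContDiff.sum fun i _ => (hf.contDiff.pder le_rfl i).pder le_rfl i,
    fun x k => Finset.sum_congr rfl fun i _ => ((hf.pder i).pder i).zPeriodic x k⟩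

end SmoothPeriodic

end Periodic

section FundamentalDomain

variable {d : ℕ}

theorem fundDom_eq_preimage_ofLp :
    fundDom d = WithLp.ofLp ⁻¹' Set.univ.pi fun _ => Set.Ico (0 : ℝ) 1 := by
  ext x
  simp [fundDom]

theorem measurableSet_fundDom : MeasurableSet (fundDom d) := by
  rw [fundDom_eq_preimage_ofLp]
  exact (MeasurableSet.univ_pi fun _ => measurableSet_Ico).preimage (WithLp.measurable_ofLp 2 _)

theorem fundDom_subset_image_Icc : fundDom d ⊆ WithLp.toLp 2 '' Set.Icc (0 : Fin d → ℝ) 1 :=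
  fun x hx => ⟨WithLp.ofLp x, ⟨fun i => (hx i).1, fun i => (hx i).2.le⟩, rfl⟩

theorem isCompact_toLp_image_Icc : IsCompact (WithLp.toLp 2 '' Set.Icc (0 : Fin d → ℝ) 1) :=
  isCompact_Icc.image (PiLp.continuous_toLp 2 _)

theorem isBounded_fundDom : Bornology.IsBounded (fundDom d) :=
  isCompact_toLp_image_Icc.isBounded.subset fundDom_subset_image_Icc

theorem Continuous.integrableOn_fundDom {f : EuclideanSpace ℝ (Fin d) → ℝ}
    (hf : Continuous f) : IntegrableOn f (fundDom d) :=
  (hf.continuousOn.integrableOn_compact isCompact_toLp_image_Icc).mono_set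
    fundDom_subset_image_Icc

theorem setIntegral_fundDom_eq_Icc (f : EuclideanSpace ℝ (Fin d) → ℝ) :
    ∫ x in fundDom d, f x = ∫ y in Set.Icc (0 : Fin d → ℝ) 1, f (WithLp.toLp 2 y) := by
  rw [← (PiLp.volume_preserving_toLp (Fin d)).setIntegral_preimage_emb
    (MeasurableEquiv.toLp 2 (Fin d → ℝ)).measurableEmbedding, fundDom_eq_preimage_ofLp,
    volume_pi]
  exact setIntegral_congr_set Measure.univ_pi_Ico_ae_eq_Icc

end FundamentalDomain

theorem Fin.insertNth_one_eq_insertNth_zero_add_single {n : ℕ} (i : Fin (n + 1))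
    (x : Fin n → ℝ) :
    i.insertNth (α := fun _ => ℝ) 1 x = i.insertNth 0 x + Pi.single i 1 := by
  simpa [Fin.insertNth_zero_right] using Fin.insertNth_add (α := fun _ => ℝ) i 0 1 x 0

theorem integral_Icc_fderiv_single_eq_zero {n : ℕ} {G : (Fin (n + 1) → ℝ) → ℝ}
    (hG : ContDiff ℝ 1 G) (i : Fin (n + 1)) (hper : ∀ z, G (z + Pi.single i 1) = G z) :
    ∫ y in Set.Icc (0 : Fin (n + 1) → ℝ) 1, fderiv ℝ G y (Pi.single i 1) = 0 := by
  have hGd : Differentiable ℝ G := hG.differentiable one_ne_zero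
  have hsum : ∀ y : Fin (n + 1) → ℝ,
      ∑ j, Pi.single (M := fun _ => _ →L[ℝ] ℝ) i (fderiv ℝ G y) j (Pi.single j 1)
        = fderiv ℝ G y (Pi.single i 1) := fun y => by
    rw [Finset.sum_eq_single i (fun j _ h => by simp [h]) (by simp)]
    simp
  simp_rw [← hsum]
  rw [integral_divergence_of_hasFDerivAt_off_countable' 0 1 zero_le_one
    (Pi.single i G) (fun j y => Pi.single (M := fun _ => _ →L[ℝ] ℝ) i (fderiv ℝ G y) j)
    ∅ Set.countable_empty ?_ ?_ ?_]
  · refine Finset.sum_eq_zero fun j _ => ?_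
    rcases eq_or_ne j i with rfl | h
    · simp [Fin.insertNth_one_eq_insertNth_zero_add_single, hper]
    · simp [h]
  · intro j
    rcases eq_or_ne j i with rfl | h
    · simpa using hG.continuous.continuousOn
    · rw [Pi.single_eq_of_ne h]
      exact continuousOn_const
  · intro y _ j
    rcases eq_or_ne j i with rfl | h
    · simpa using (hGd y).hasFDerivAt
    · rw [Pi.single_eq_of_ne h, Pi.single_eq_of_ne h]
      exact hasFDerivAt_const 0 y
  · simp only [hsum]
    exact ((hG.continuous_fderiv one_ne_zero).clm_apply continuous_const).continuousOn
      |>.integrableOn_compact isCompact_Icc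

theorem integral_fundDom_pder_eq_zero {d : ℕ} {f : EuclideanSpace ℝ (Fin d) → ℝ}
    (hf : ContDiff ℝ 1 f) (hper : ZPeriodic f) (i : Fin d) :
    ∫ x in fundDom d, pder i f x = 0 := by
  obtain ⟨n, rfl⟩ : ∃ n, d = n + 1 := Nat.exists_eq_succ_of_ne_zero i.pos.ne'
  let L := (PiLp.continuousLinearEquiv 2 ℝ fun _ : Fin (n + 1) => ℝ).symm
  have hpder y : pder i f (WithLp.toLp 2 y) = fderiv ℝ (f ∘ L) y (Pi.single i 1) := by
    rw [L.comp_right_fderiv]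
    rfl
  have hLper z : (f ∘ L) (z + Pi.single i 1) = (f ∘ L) z := by
    have hsingle :
        (fun j => ((Pi.single (M := fun _ => ℤ) i 1 j : ℤ) : ℝ)) = Pi.single i 1 := by
      ext j; rcases eq_or_ne j i with rfl | h <;> simp [*]
    simpa [L, hsingle] using hper (L z) (Pi.single i 1)
  rw [setIntegral_fundDom_eq_Icc]
  simp_rw [hpder]
  exact integral_Icc_fderiv_single_eq_zero (hf.comp L.contDiff) i hLper

section Green

variable {d : ℕ}

theorem integral_fundDom_sum_mul_pder_eq_neg {ι : Type*} [Fintype ι]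
    {a b : ι → EuclideanSpace ℝ (Fin d) → ℝ} (ha : ∀ k, SmoothPeriodic (a k))
    (hb : ∀ k, SmoothPeriodic (b k)) (dir : ι → Fin d) :
    ∫ x in fundDom d, ∑ k, a k x * pder (dir k) (b k) x
      = -∫ x in fundDom d, ∑ k, pder (dir k) (a k) x * b k x := by
  have hab : ∀ k, SmoothPeriodic fun x => a k x * b k x := fun k => (ha k).mul (hb k)
  have hzero : ∫ x in fundDom d, ∑ k, pder (dir k) (fun y => a k y * b k y) x = 0 := by
    rw [integral_finsetSum _ fun k _ => ((hab k).pder _).continuous.integrableOn_fundDom]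
    exact Finset.sum_eq_zero fun k _ =>
      integral_fundDom_pder_eq_zero ((hab k).contDiff.of_le (by simp)) (hab k).zPeriodic _
  simp only [pder_mul ((ha _).differentiable _) ((hb _).differentiable _),
    Finset.sum_add_distrib] at hzero
  have ha' k : Continuous (a k) := (ha k).continuous
  have hb' k : Continuous (b k) := (hb k).continuous
  have hda k : Continuous (pder (dir k) (a k)) := ((ha k).pder _).continuous
  have hdb k : Continuous (pder (dir k) (b k)) := ((hb k).pder _).continuous
  rw [integral_add (Continuous.integrableOn_fundDom (by fun_prop))
    (Continuous.integrableOn_fundDom (by fun_prop))] at hzero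
  linarith

theorem integral_fundDom_sum_sum_mul_pder_eq_neg
    {a b : Fin d → Fin d → EuclideanSpace ℝ (Fin d) → ℝ}
    (ha : ∀ i j, SmoothPeriodic (a i j)) (hb : ∀ i j, SmoothPeriodic (b i j)) :
    ∫ x in fundDom d, ∑ i, ∑ j, a i j x * pder j (b i j) x
      = -∫ x in fundDom d, ∑ i, ∑ j, pder j (a i j) x * b i j x := by
  simp only [← Fintype.sum_prod_type']
  exact integral_fundDom_sum_mul_pder_eq_neg (fun p => ha p.1 p.2) (fun p => hb p.1 p.2) Prod.snd

end Green

section Energy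

variable {d : ℕ} {u : EuclideanSpace ℝ (Fin d) → ℝ}

theorem integral_mul_grad_dot_grad_lap_eq_hessSq (hu : SmoothPeriodic u) :
    ∫ x in fundDom d, u x * ∑ i, pder i u x * pder i (lap u) x
      = -(∫ x in fundDom d, ∑ i, ∑ j, pder j u x * pder i u x * pder j (pder i u) x)
        - ∫ x in fundDom d, u x * hessSq u x := by
  have hu0 : Continuous u := hu.continuous
  have hu1 i : Continuous (pder i u) := (hu.pder i).continuous
  have hu2 i j : Continuous (pder j (pder i u)) := ((hu.pder i).pder j).continuous
  have hlap i x : pder i (lap u) x = ∑ j, pder j (pder j (pder i u)) x := by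
    rw [pder_lap (hu.contDiff.of_le (by norm_cast))]
    rfl
  calc ∫ x in fundDom d, u x * ∑ i, pder i u x * pder i (lap u) x
      = ∫ x in fundDom d, ∑ i, ∑ j, (u x * pder i u x) * pder j (pder j (pder i u)) x := by
        simp only [hlap, Finset.mul_sum, mul_assoc]
    _ = -∫ x in fundDom d, ∑ i, ∑ j,
          pder j (fun y => u y * pder i u y) x * pder j (pder i u) x :=
        integral_fundDom_sum_sum_mul_pder_eq_neg (fun i _ => hu.mul (hu.pder i))
          (fun i j => (hu.pder i).pder j)
    _ = -∫ x in fundDom d, ((∑ i, ∑ j, pder j u x * pder i u x * pder j (pder i u) x)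
          + u x * hessSq u x) := by
        congr 2 with x
        simp only [pder_mul (hu.differentiable x) ((hu.pder _).differentiable x), add_mul,
          Finset.sum_add_distrib, hessSq, Finset.mul_sum]
        rw [Finset.sum_comm (f := fun i j => u x * pder i (pder j u) x ^ 2)]
        simp only [sq, mul_assoc]
    _ = _ := by
        rw [integral_add (Continuous.integrableOn_fundDom (by fun_prop))
          (Continuous.integrableOn_fundDom (by unfold hessSq; fun_prop))]
        ring

theorem integral_mul_grad_dot_grad_lap_eq_gradSq (hu : SmoothPeriodic u) :
    ∫ x in fundDom d, u x * ∑ i, pder i u x * pder i (lap u) x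
      = -(∫ x in fundDom d, gradSq u x * lap u x) - ∫ x in fundDom d, u x * lap u x ^ 2 := by
  have hu0 : Continuous u := hu.continuous
  have hu1 i : Continuous (pder i u) := (hu.pder i).continuous
  have hlap : Continuous (lap u) := hu.lap.continuous
  calc ∫ x in fundDom d, u x * ∑ i, pder i u x * pder i (lap u) x
      = ∫ x in fundDom d, ∑ i, (u x * pder i u x) * pder i (lap u) x := by
        simp only [Finset.mul_sum, mul_assoc]
    _ = -∫ x in fundDom d, ∑ i, pder i (fun y => u y * pder i u y) x * lap u x :=
        integral_fundDom_sum_mul_pder_eq_neg (fun i => hu.mul (hu.pder i)) (fun _ => hu.lap) id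
    _ = -∫ x in fundDom d, (gradSq u x * lap u x + u x * lap u x ^ 2) := by
        congr 2 with x
        simp only [pder_mul (hu.differentiable x) ((hu.pder _).differentiable x), add_mul,
          Finset.sum_add_distrib, gradSq, lap, ← Finset.sum_mul, ← Finset.mul_sum, sq]
        ring
    _ = _ := by
        rw [integral_add (Continuous.integrableOn_fundDom (by unfold gradSq; fun_prop))
          (Continuous.integrableOn_fundDom (by fun_prop))]
        ring

theorem two_mul_integral_grad_hess_grad_eq_neg_gradSq_lap (hu : SmoothPeriodic u) :
    2 * ∫ x in fundDom d, ∑ i, ∑ j, pder j u x * pder i u x * pder j (pder i u) x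
      = -∫ x in fundDom d, gradSq u x * lap u x :=
  calc 2 * ∫ x in fundDom d, ∑ i, ∑ j, pder j u x * pder i u x * pder j (pder i u) x
      = ∫ x in fundDom d, ∑ i, ∑ j,
          pder j u x * pder j (fun y => pder i u y * pder i u y) x := by
        rw [← integral_const_mul]
        congr 1 with x
        simp only [pder_mul ((hu.pder _).differentiable x) ((hu.pder _).differentiable x),
          Finset.mul_sum]
        exact Finset.sum_congr rfl fun i _ => Finset.sum_congr rfl fun j _ => by ring
    _ = -∫ x in fundDom d, ∑ i, ∑ j, pder j (pder j u) x * (pder i u x * pder i u x) :=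
        integral_fundDom_sum_sum_mul_pder_eq_neg (fun _ j => hu.pder j)
          (fun i _ => (hu.pder i).mul (hu.pder i))
    _ = -∫ x in fundDom d, gradSq u x * lap u x := by
        congr 2 with x
        simp only [gradSq, lap, Finset.sum_mul, Finset.mul_sum]
        rw [Finset.sum_comm]
        exact Finset.sum_congr rfl fun i _ => Finset.sum_congr rfl fun j _ => by ring

theorem integral_mul_grad_dot_grad_lap_nonpos (hu : SmoothPeriodic u) (hnn : ∀ x, 0 ≤ u x) :
    ∫ x in fundDom d, u x * ∑ i, pder i u x * pder i (lap u) x ≤ 0 := by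
  have hA : 0 ≤ ∫ x in fundDom d, u x * hessSq u x :=
    setIntegral_nonneg measurableSet_fundDom fun x _ => mul_nonneg (hnn x)
      (Finset.sum_nonneg fun _ _ => Finset.sum_nonneg fun _ _ => sq_nonneg _)
  have hC : 0 ≤ ∫ x in fundDom d, u x * lap u x ^ 2 :=
    setIntegral_nonneg measurableSet_fundDom fun x _ => mul_nonneg (hnn x) (sq_nonneg _)
  linarith [integral_mul_grad_dot_grad_lap_eq_hessSq hu,
    integral_mul_grad_dot_grad_lap_eq_gradSq hu,
    two_mul_integral_grad_hess_grad_eq_neg_gradSq_lap hu]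

theorem integral_mul_div_lubricationFlux_nonpos {g μ : ℝ} (hg : 0 ≤ g) (hμ : 0 ≤ μ)
    (hu : SmoothPeriodic u) (hnn : ∀ x, 0 ≤ u x) :
    ∫ x in fundDom d, u x * ∑ i,
      pder i (fun y => g * u y * pder i u y - μ * u y * pder i (lap u) y) x ≤ 0 := by
  have hflux i : SmoothPeriodic fun y => g * u y * pder i u y - μ * u y * pder i (lap u) y :=
    (((SmoothPeriodic.const g).mul hu).mul (hu.pder i)).sub
      (((SmoothPeriodic.const μ).mul hu).mul (hu.lap.pder i))
  have hu0 : Continuous u := hu.continuous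
  have hu1 i : Continuous (pder i u) := (hu.pder i).continuous
  have hu3 i : Continuous (pder i (lap u)) := (hu.lap.pder i).continuous
  have hG : 0 ≤ ∫ x in fundDom d, u x * gradSq u x :=
    setIntegral_nonneg measurableSet_fundDom fun x _ => mul_nonneg (hnn x)
      (Finset.sum_nonneg fun _ _ => sq_nonneg _)
  calc ∫ x in fundDom d, u x * ∑ i,
        pder i (fun y => g * u y * pder i u y - μ * u y * pder i (lap u) y) x
      = ∫ x in fundDom d, ∑ i,
          u x * pder i (fun y => g * u y * pder i u y - μ * u y * pder i (lap u) y) x := by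
        simp only [Finset.mul_sum]
    _ = -∫ x in fundDom d, ∑ i,
          pder i u x * (g * u x * pder i u x - μ * u x * pder i (lap u) x) :=
        integral_fundDom_sum_mul_pder_eq_neg (fun _ => hu) hflux id
    _ = -(g * ∫ x in fundDom d, u x * gradSq u x)
          + μ * ∫ x in fundDom d, u x * ∑ i, pder i u x * pder i (lap u) x := by
        rw [← integral_neg, ← integral_const_mul, ← integral_const_mul, neg_add_eq_sub,
          ← integral_sub (Continuous.integrableOn_fundDom (by fun_prop))
          (Continuous.integrableOn_fundDom (by unfold gradSq; fun_prop))]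
        congr 1 with x
        simp only [gradSq, Finset.mul_sum, ← Finset.sum_sub_distrib, ← Finset.sum_neg_distrib]
        exact Finset.sum_congr rfl fun i _ => by ring
    _ ≤ 0 := by
        linarith [mul_nonneg hg hG,
          mul_nonpos_of_nonneg_of_nonpos hμ (integral_mul_grad_dot_grad_lap_nonpos hu hnn)]

end Energy

theorem hasDerivAt_setIntegral_of_contDiff {E : Type*} [NormedAddCommGroup E] [NormedSpace ℝ E]
    [ProperSpace E] [MeasurableSpace E] [BorelSpace E] {μ : Measure E}
    [IsFiniteMeasureOnCompacts μ] {F : ℝ × E → ℝ} (hF : ContDiff ℝ 1 F) {S : Set E}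
    (hS : Bornology.IsBounded S) (hSm : MeasurableSet S) (t : ℝ) :
    HasDerivAt (fun s => ∫ x in S, F (s, x) ∂μ)
      (∫ x in S, deriv (fun s => F (s, x)) t ∂μ) t := by
  let F' : ℝ × E → ℝ := fun p => fderiv ℝ F p (1, 0)
  have hF' : Continuous F' := (hF.continuous_fderiv one_ne_zero).clm_apply continuous_const
  have hpartial (x : E) (s : ℝ) : HasDerivAt (fun s => F (s, x)) (F' (s, x)) s :=
    (hF.differentiable one_ne_zero (s, x)).hasFDerivAt.comp_hasDerivAt s
      ((hasDerivAt_id s).prodMk (hasDerivAt_const s x))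
  have hK := (isCompact_closedBall t 1).prod hS.isCompact_closure
  obtain ⟨M, hM⟩ := hK.exists_bound_of_continuousOn hF'.continuousOn
  have hslice (s : ℝ) : Continuous fun x => F (s, x) :=
    hF.continuous.comp (Continuous.prodMk_right s)
  have key := hasDerivAt_integral_of_dominated_loc_of_deriv_le (μ := μ.restrict S)
    (F := fun s x => F (s, x)) (F' := fun s x => F' (s, x)) (bound := fun _ => M)
    (Metric.closedBall_mem_nhds t one_pos)
    (Filter.Eventually.of_forall fun s => (hslice s).aestronglyMeasurable)
    (((hslice t).continuousOn.integrableOn_compact hS.isCompact_closure).mono_set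
      subset_closure)
    (hF'.comp (Continuous.prodMk_right t)).aestronglyMeasurable
    ((ae_restrict_iff' hSm).2 (Filter.Eventually.of_forall fun x hx s hs =>
      hM (s, x) ⟨hs, subset_closure hx⟩))
    (integrableOn_const hS.measure_lt_top.ne)
    (Filter.Eventually.of_forall fun x s _ => hpartial x s)
  simpa only [(hpartial _ t).deriv] using key.2

theorem lubrication_L2_decay_general (d : ℕ) (g μ : ℝ) (hg : 0 ≤ g) (hμ : 0 ≤ μ)
    (T : ℝ) (h : ℝ × EuclideanSpace ℝ (Fin d) → ℝ)
    (hsm : ContDiff ℝ (⊤ : ℕ∞) h)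
    (hper : ∀ t, ZPeriodic (fun x => h (t, x)))
    (hpos : ∀ t x, 0 < h (t, x))
    (heq : ∀ t ∈ Set.Icc (0 : ℝ) T, ∀ x,
      deriv (fun s => h (s, x)) t
        - (∑ i, pder i (fun y =>
            g * h (t, y) * pder i (fun z => h (t, z)) y
            - μ * h (t, y) * pder i (lap (fun z => h (t, z))) y) x) = 0) :
    ∀ t ∈ Set.Icc (0 : ℝ) T,
      deriv (fun s => ∫ x in fundDom d, (h (s, x)) ^ 2) t ≤ 0 := by
  intro t ht
  have hslice : SmoothPeriodic fun x => h (t, x) :=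
    ⟨hsm.comp (contDiff_const.prodMk contDiff_id), hper t⟩
  have hsq x : deriv (fun s => h (s, x) ^ 2) t
      = 2 * (h (t, x) * ∑ i, pder i (fun y =>
            g * h (t, y) * pder i (fun z => h (t, z)) y
            - μ * h (t, y) * pder i (lap (fun z => h (t, z))) y) x) := by
    have hdiff : DifferentiableAt ℝ (fun s => h (s, x)) t :=
      (hsm.comp (contDiff_id.prodMk contDiff_const)).differentiable (by simp) t
    rw [deriv_fun_pow hdiff, ← sub_eq_zero.1 (heq t ht x)]
    ring
  rw [(hasDerivAt_setIntegral_of_contDiff ((hsm.pow 2).of_le (by simp)) isBounded_fundDom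
    measurableSet_fundDom t).deriv]
  simp_rw [hsq]
  rw [integral_const_mul]
  exact mul_nonpos_of_nonneg_of_nonpos zero_le_two
    (integral_mul_div_lubricationFlux_nonpos hg hμ hslice fun x => (hpos t x).le)

/-- Decay of the `L²`-norm for the lubrication equation
`∂ₜh − div(g h ∇h − μ h ∇Δh) = 0` on `𝕋^d` (first half of Theorem `Theo2`). -/
theorem lubrication_L2_decay (d : ℕ) (hd : 1 ≤ d) (g μ : ℝ) (hg : 0 ≤ g) (hμ : 0 ≤ μ)
    (T : ℝ) (h : ℝ × EuclideanSpace ℝ (Fin d) → ℝ)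
    (hsm : ContDiff ℝ (⊤ : ℕ∞) h)
    (hper : ∀ t, ZPeriodic (fun x => h (t, x)))
    (hpos : ∀ t x, 0 < h (t, x))
    (heq : ∀ t ∈ Set.Icc (0 : ℝ) T, ∀ x,
      deriv (fun s => h (s, x)) t
        - (∑ i, pder i (fun y =>
            g * h (t, y) * pder i (fun z => h (t, z)) y
            - μ * h (t, y) * pder i (lap (fun z => h (t, z))) y) x) = 0) :
    ∀ t ∈ Set.Icc (0 : ℝ) T,
      deriv (fun s => ∫ x in fundDom d, (h (s, x)) ^ 2) t ≤ 0 :=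
  lubrication_L2_decay_general d g μ hg hμ T h hsm hper hpos heq
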